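/- arXiv:2511.07499 — 2 statements merged into one kernel-verified Lean document; each statement's English description precedes it below -/
import Mathlib

section
/- Let n ≥ 1, let M ∈ ℝ^{n×n}, let μ, ν ∈ ℝ^n be probability vectors with strictly positive entries, and let λ > 0. Then the unique minimizer P* over the transport polytope U(μ,ν) of P ↦ ⟨P, M⟩ + (1/λ) Σ_{i,j} P_{ij} log P_{ij} has strictly positive entries and admits the Sinkhorn factorization P*_{ij} = u_i · exp(−λ M_{ij}) · v_j for some vectors u, v ∈ ℝ^n with strictly positive entries. -/
/-- The transport polytope `U(μ, ν)`: nonnegative matrices with row sums `μ`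
and column sums `ν`. -/
def transportPolytope (n : ℕ) (μ ν : Fin n → ℝ) : Set (Matrix (Fin n) (Fin n) ℝ) :=
  {P | (∀ i j, 0 ≤ P i j) ∧ (∀ i, ∑ j, P i j = μ i) ∧ (∀ j, ∑ i, P i j = ν j)}

/-- Entropy-regularized OT objective `⟨P, M⟩ + (1/λ) Σ P_{ij} log P_{ij}`
(with the convention `0 · log 0 = 0`, automatic since `Real.log 0 = 0`). -/
noncomputable def entRegObjective (n : ℕ) (M : Matrix (Fin n) (Fin n) ℝ) (lam : ℝ)
    (P : Matrix (Fin n) (Fin n) ℝ) : ℝ :=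
  (∑ i, ∑ j, P i j * M i j) + (1 / lam) * ∑ i, ∑ j, P i j * Real.log (P i j)


/-!
Adding `t` to `P` at `(i₀, j₀)` and `(i₁, j₁)` and removing it at `(i₀, j₁)` and `(i₁, j₀)`
(`t • cycleDir`) keeps `P` in `U(μ, ν)`. By convexity of `x log x` the objective grows by at most
`t / λ` times the cross difference of `λ M + log (P + t • cycleDir)`, so at a minimizer this cross
difference is nonnegative for small `t > 0`. If `P i₀ j₀ = 0`, the positive marginals provide
positive entries `P i₀ j₁` and `P i₁ j₀`, and the term `log t → -∞` gives a contradiction; hence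
`P > 0`. Letting `t → 0` and reversing the cycle, all cross differences of `λ M + log P` vanish, so
`λ M i j + log (P i j) = a i + b j`, and `u = exp a`, `v = exp b`.
-/

open Finset Filter Topology Real Matrix

lemma mul_log_sub_mul_log_le {x y : ℝ} (hx : 0 ≤ x) (hy : 0 < y) :
    y * log y - x * log x ≤ (y - x) * (log y + 1) := by
  rcases hx.eq_or_lt with rfl | hx
  · simp only [log_zero, mul_zero, sub_zero]; linarith
  have h := mul_le_mul_of_nonneg_left (log_le_sub_one_of_pos (div_pos hy hx)) hx.le
  rw [log_div hy.ne' hx.ne', mul_sub_one, mul_div_cancel₀ _ hx.ne'] at h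
  linarith

section crossDiff

variable {ι κ α : Type*} [AddCommGroup α]

def crossDiff (f : ι → κ → α) (i₀ i₁ : ι) (j₀ j₁ : κ) : α :=
  f i₀ j₀ - f i₀ j₁ - f i₁ j₀ + f i₁ j₁

lemma crossDiff_swap (f : ι → κ → α) (i₀ i₁ : ι) (j₀ j₁ : κ) :
    crossDiff f i₁ i₀ j₀ j₁ = -crossDiff f i₀ i₁ j₀ j₁ := by
  simp only [crossDiff]; abel

lemma exists_add_of_crossDiff_eq_zero {f : ι → κ → α}
    (h : ∀ i₀ i₁ j₀ j₁, crossDiff f i₀ i₁ j₀ j₁ = 0) :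
    ∃ (a : ι → α) (b : κ → α), ∀ i j, f i j = a i + b j := by
  rcases isEmpty_or_nonempty ι with hι | ⟨⟨i₀⟩⟩
  · exact ⟨0, 0, fun i => isEmptyElim i⟩
  rcases isEmpty_or_nonempty κ with hκ | ⟨⟨j₀⟩⟩
  · exact ⟨0, 0, fun _ j => isEmptyElim j⟩
  refine ⟨fun i => f i j₀ - f i₀ j₀, fun j => f i₀ j, fun i j => ?_⟩
  have := h i i₀ j j₀
  simp only [crossDiff] at this
  show f i j = f i j₀ - f i₀ j₀ + f i₀ j
  rw [← sub_eq_zero, ← this]; abel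

end crossDiff

section cycleDir

variable {ι κ : Type*} [DecidableEq ι] [DecidableEq κ]

def cycleDir (i₀ i₁ : ι) (j₀ j₁ : κ) : Matrix ι κ ℝ :=
  vecMulVec (Pi.single i₀ 1 - Pi.single i₁ 1) (Pi.single j₀ 1 - Pi.single j₁ 1)

lemma sum_cycleDir_row [Fintype κ] (i₀ i₁ : ι) (j₀ j₁ : κ) (i : ι) :
    ∑ j, cycleDir i₀ i₁ j₀ j₁ i j = 0 := by
  simp [cycleDir, vecMulVec_apply, ← mul_sum, sum_sub_distrib]

lemma sum_cycleDir_col [Fintype ι] (i₀ i₁ : ι) (j₀ j₁ : κ) (j : κ) :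
    ∑ i, cycleDir i₀ i₁ j₀ j₁ i j = 0 := by
  simp [cycleDir, vecMulVec_apply, ← sum_mul, sum_sub_distrib]

lemma sum_sum_cycleDir_mul [Fintype ι] [Fintype κ] (f : ι → κ → ℝ) (i₀ i₁ : ι) (j₀ j₁ : κ) :
    ∑ i, ∑ j, cycleDir i₀ i₁ j₀ j₁ i j * f i j = crossDiff f i₀ i₁ j₀ j₁ := by
  simp only [cycleDir, crossDiff, vecMulVec_apply, Pi.sub_apply, Pi.single_apply, mul_sub, sub_mul,
    mul_ite, ite_mul, mul_one, one_mul, mul_zero, zero_mul, sum_sub_distrib, sum_ite_eq', mem_univ,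
    if_true]
  ring

variable {i₀ i₁ : ι} {j₀ j₁ : κ}

lemma mem_of_cycleDir_ne_zero {i : ι} {j : κ} (h : cycleDir i₀ i₁ j₀ j₁ i j ≠ 0) :
    (i = i₀ ∨ i = i₁) ∧ (j = j₀ ∨ j = j₁) := by
  by_contra h'
  simp only [not_and_or, not_or] at h'
  apply h
  rcases h' with ⟨hi₀, hi₁⟩ | ⟨hj₀, hj₁⟩ <;> simp [cycleDir, vecMulVec_apply, *]

variable (hi : i₀ ≠ i₁) (hj : j₀ ≠ j₁)
include hi hj

lemma cycleDir_apply_left_left : cycleDir i₀ i₁ j₀ j₁ i₀ j₀ = 1 := by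
  simp [cycleDir, vecMulVec_apply, hi, hj]

lemma cycleDir_apply_left_right : cycleDir i₀ i₁ j₀ j₁ i₀ j₁ = -1 := by
  simp [cycleDir, vecMulVec_apply, hi, hj.symm]

lemma cycleDir_apply_right_left : cycleDir i₀ i₁ j₀ j₁ i₁ j₀ = -1 := by
  simp [cycleDir, vecMulVec_apply, hi.symm, hj]

lemma cycleDir_apply_right_right : cycleDir i₀ i₁ j₀ j₁ i₁ j₁ = 1 := by
  simp [cycleDir, vecMulVec_apply, hi.symm, hj.symm]

lemma add_smul_cycleDir_pos_or_eq {P : Matrix ι κ ℝ} (hP : ∀ i j, 0 ≤ P i j) {t : ℝ} (ht : 0 < t)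
    (h₀₁ : t < P i₀ j₁) (h₁₀ : t < P i₁ j₀) (i : ι) (j : κ) :
    0 < (P + t • cycleDir i₀ i₁ j₀ j₁) i j ∨ (P + t • cycleDir i₀ i₁ j₀ j₁) i j = P i j := by
  by_cases hD : cycleDir i₀ i₁ j₀ j₁ i j = 0
  · right; simp [hD]
  left
  obtain ⟨rfl | rfl, rfl | rfl⟩ := mem_of_cycleDir_ne_zero hD <;>
    simp only [Matrix.add_apply, Matrix.smul_apply, smul_eq_mul, cycleDir_apply_left_left hi hj,
      cycleDir_apply_left_right hi hj, cycleDir_apply_right_left hi hj,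
      cycleDir_apply_right_right hi hj, mul_one, mul_neg] <;>
    linarith [hP i j]

end cycleDir

section transport

variable {n : ℕ} {μ ν : Fin n → ℝ} {M P Q : Matrix (Fin n) (Fin n) ℝ} {lam : ℝ}

lemma add_smul_cycleDir_mem_transportPolytope (hP : P ∈ transportPolytope n μ ν)
    (i₀ i₁ j₀ j₁ : Fin n) {t : ℝ} (hnn : ∀ i j, 0 ≤ (P + t • cycleDir i₀ i₁ j₀ j₁) i j) :
    P + t • cycleDir i₀ i₁ j₀ j₁ ∈ transportPolytope n μ ν := by
  obtain ⟨-, hrow, hcol⟩ := hP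
  refine ⟨hnn, fun i => ?_, fun j => ?_⟩
  · simp [sum_add_distrib, ← mul_sum, sum_cycleDir_row, hrow]
  · simp [sum_add_distrib, ← mul_sum, sum_cycleDir_col, hcol]

lemma entRegObjective_sub_le (hlam : 0 ≤ lam) (hP : P ∈ transportPolytope n μ ν)
    (hQ : Q ∈ transportPolytope n μ ν) (hsupp : ∀ i j, 0 < Q i j ∨ Q i j = P i j) :
    entRegObjective n M lam Q - entRegObjective n M lam P ≤
      ∑ i, ∑ j, (Q i j - P i j) * (M i j + lam⁻¹ * log (Q i j)) := by
  have hentropy : ∀ i j, Q i j * log (Q i j) - P i j * log (P i j) ≤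
      (Q i j - P i j) * (log (Q i j) + 1) := by
    intro i j
    rcases hsupp i j with h | h
    · exact mul_log_sub_mul_log_le (hP.1 i j) h
    · simp [h]
  have hmass : ∑ i, ∑ j, (Q i j - P i j) = 0 := by
    simp [sum_sub_distrib, hP.2.1, hQ.2.1]
  calc entRegObjective n M lam Q - entRegObjective n M lam P
      = ∑ i, ∑ j, ((Q i j - P i j) * M i j
          + lam⁻¹ * (Q i j * log (Q i j) - P i j * log (P i j))) := by
        simp only [entRegObjective, one_div, mul_sub, sub_mul, sum_add_distrib, sum_sub_distrib,
          ← mul_sum]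
        ring
    _ ≤ ∑ i, ∑ j, ((Q i j - P i j) * M i j
          + lam⁻¹ * ((Q i j - P i j) * (log (Q i j) + 1))) := by
        gcongr with i _ j _
        exact hentropy i j
    _ = ∑ i, ∑ j, (Q i j - P i j) * (M i j + lam⁻¹ * log (Q i j))
          + lam⁻¹ * ∑ i, ∑ j, (Q i j - P i j) := by
        simp only [mul_sum, ← sum_add_distrib]
        refine sum_congr rfl fun i _ => sum_congr rfl fun j _ => ?_
        ring
    _ = _ := by rw [hmass, mul_zero, add_zero]

variable (hlam : 0 < lam) (hmem : P ∈ transportPolytope n μ ν)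
  (hmin : IsMinOn (entRegObjective n M lam) (transportPolytope n μ ν) P)
include hlam hmem hmin

lemma eventually_cycle_gain_nonneg {i₀ i₁ j₀ j₁ : Fin n} (hi : i₀ ≠ i₁) (hj : j₀ ≠ j₁)
    (h₀₁ : 0 < P i₀ j₁) (h₁₀ : 0 < P i₁ j₀) :
    ∀ᶠ t in 𝓝[>] 0, 0 ≤ lam * crossDiff M i₀ i₁ j₀ j₁ +
      (log (P i₀ j₀ + t) - log (P i₀ j₁ - t) - log (P i₁ j₀ - t) + log (P i₁ j₁ + t)) := by
  filter_upwards [Ioo_mem_nhdsGT (lt_min h₀₁ h₁₀)] with t ⟨ht, ht'⟩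
  rw [lt_min_iff] at ht'
  set Q := P + t • cycleDir i₀ i₁ j₀ j₁
  have hsupp : ∀ i j, 0 < Q i j ∨ Q i j = P i j :=
    add_smul_cycleDir_pos_or_eq hi hj hmem.1 ht ht'.1 ht'.2
  have hQ : Q ∈ transportPolytope n μ ν := add_smul_cycleDir_mem_transportPolytope hmem _ _ _ _
    fun i j => show 0 ≤ Q i j from (hsupp i j).elim le_of_lt fun h => h ▸ hmem.1 i j
  have hgain := (sub_nonneg.2 (isMinOn_iff.1 hmin Q hQ)).trans
    (entRegObjective_sub_le hlam.le hmem hQ hsupp)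
  have hlinear : ∑ i, ∑ j, (Q i j - P i j) * (M i j + lam⁻¹ * log (Q i j)) =
      t * crossDiff (fun i j => M i j + lam⁻¹ * log (Q i j)) i₀ i₁ j₀ j₁ := by
    rw [← sum_sum_cycleDir_mul, mul_sum]
    simp only [Q, mul_sum, Matrix.add_apply, Matrix.smul_apply, smul_eq_mul, add_sub_cancel_left,
      mul_assoc]
  rw [hlinear, mul_nonneg_iff_of_pos_left ht] at hgain
  calc 0 ≤ lam * crossDiff (fun i j => M i j + lam⁻¹ * log (Q i j)) i₀ i₁ j₀ j₁ :=
        mul_nonneg hlam.le hgain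
    _ = _ := by
      simp only [Q, crossDiff, Matrix.add_apply, Matrix.smul_apply, smul_eq_mul,
        cycleDir_apply_left_left hi hj, cycleDir_apply_left_right hi hj,
        cycleDir_apply_right_left hi hj, cycleDir_apply_right_right hi hj, mul_one, mul_neg,
        ← sub_eq_add_neg]
      field_simp
      ring

lemma pos_of_isMinOn_entRegObjective (hμ : ∀ i, 0 < μ i) (hν : ∀ j, 0 < ν j) (i₀ j₀ : Fin n) :
    0 < P i₀ j₀ := by
  by_contra hzero
  have h₀₀ : P i₀ j₀ = 0 := le_antisymm (not_lt.1 hzero) (hmem.1 i₀ j₀)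
  obtain ⟨j₁, -, h₀₁⟩ : ∃ j ∈ univ, (0 : ℝ) < P i₀ j :=
    exists_lt_of_sum_lt (by simpa [hmem.2.1] using hμ i₀)
  obtain ⟨i₁, -, h₁₀⟩ : ∃ i ∈ univ, (0 : ℝ) < P i j₀ :=
    exists_lt_of_sum_lt (by simpa [hmem.2.2] using hν j₀)
  have hi : i₀ ≠ i₁ := by rintro rfl; linarith
  have hj : j₀ ≠ j₁ := by rintro rfl; linarith
  -- Moving mass `t` onto the empty entry gains `t log t`, which beats every linear loss.
  have hbdd : ∀ᶠ t in 𝓝[>] 0, -lam * crossDiff M i₀ i₁ j₀ j₁ + log (P i₀ j₁ / 2)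
      + log (P i₁ j₀ / 2) - log (P i₁ j₁ + 1) ≤ log t := by
    filter_upwards [eventually_cycle_gain_nonneg hlam hmem hmin hi hj h₀₁ h₁₀,
      Ioo_mem_nhdsGT (lt_min (lt_min (half_pos h₀₁) (half_pos h₁₀)) one_pos)]
      with t hgain ⟨ht, ht'⟩
    simp only [lt_min_iff] at ht'
    rw [h₀₀, zero_add] at hgain
    have h₀₁' := log_le_log (half_pos h₀₁) (by linarith : P i₀ j₁ / 2 ≤ P i₀ j₁ - t)
    have h₁₀' := log_le_log (half_pos h₁₀) (by linarith : P i₁ j₀ / 2 ≤ P i₁ j₀ - t)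
    have h₁₁' := log_le_log (by linarith [hmem.1 i₁ j₁])
      (by linarith : P i₁ j₁ + t ≤ P i₁ j₁ + 1)
    linarith
  obtain ⟨t, hlow, hhigh⟩ :=
    (hbdd.and (tendsto_log_nhdsGT_zero.eventually (eventually_lt_atBot _))).exists
  exact hhigh.not_ge hlow

lemma crossDiff_eq_zero_of_isMinOn_entRegObjective (hpos : ∀ i j, 0 < P i j)
    (i₀ i₁ j₀ j₁ : Fin n) :
    crossDiff (fun i j => lam * M i j + log (P i j)) i₀ i₁ j₀ j₁ = 0 := by
  have hnonneg : ∀ {i₀ i₁ j₀ j₁}, i₀ ≠ i₁ → j₀ ≠ j₁ →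
      0 ≤ crossDiff (fun i j => lam * M i j + log (P i j)) i₀ i₁ j₀ j₁ := by
    intro i₀ i₁ j₀ j₁ hi hj
    have hcont : ContinuousAt (fun t => lam * crossDiff M i₀ i₁ j₀ j₁ + (log (P i₀ j₀ + t)
        - log (P i₀ j₁ - t) - log (P i₁ j₀ - t) + log (P i₁ j₁ + t))) 0 := by
      fun_prop (disch := simp [(hpos _ _).ne'])
    have := ge_of_tendsto (hcont.tendsto.mono_left nhdsWithin_le_nhds)
      (eventually_cycle_gain_nonneg hlam hmem hmin hi hj (hpos _ _) (hpos _ _))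
    simp only [crossDiff, add_zero, sub_zero] at this ⊢
    linarith
  rcases eq_or_ne i₀ i₁ with rfl | hi
  · simp [crossDiff]
  rcases eq_or_ne j₀ j₁ with rfl | hj
  · simp [crossDiff]
  have hnonpos := hnonneg hi.symm hj
  rw [crossDiff_swap, neg_nonneg] at hnonpos
  exact le_antisymm hnonpos (hnonneg hi hj)

end transport

theorem entReg_minimizer_sinkhorn_factorization_general (n : ℕ)
    (M : Matrix (Fin n) (Fin n) ℝ) (μ ν : Fin n → ℝ)
    (hμpos : ∀ i, 0 < μ i) (hνpos : ∀ j, 0 < ν j)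
    (lam : ℝ) (hlam : 0 < lam)
    (Pstar : Matrix (Fin n) (Fin n) ℝ)
    (hmem : Pstar ∈ transportPolytope n μ ν)
    (hmin : ∀ Q ∈ transportPolytope n μ ν,
      entRegObjective n M lam Pstar ≤ entRegObjective n M lam Q) :
    (∀ i j, 0 < Pstar i j) ∧
      ∃ u v : Fin n → ℝ, (∀ i, 0 < u i) ∧ (∀ j, 0 < v j) ∧
        ∀ i j, Pstar i j = u i * Real.exp (-lam * M i j) * v j := by
  have hmin' := isMinOn_iff.2 hmin
  have hpos := pos_of_isMinOn_entRegObjective hlam hmem hmin' hμpos hνpos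
  obtain ⟨a, b, hab⟩ := exists_add_of_crossDiff_eq_zero
    (crossDiff_eq_zero_of_isMinOn_entRegObjective hlam hmem hmin' hpos)
  refine ⟨hpos, fun i => exp (a i), fun j => exp (b j), fun i => exp_pos _, fun j => exp_pos _,
    fun i j => ?_⟩
  calc Pstar i j = exp (log (Pstar i j)) := (exp_log (hpos i j)).symm
    _ = exp (a i + -lam * M i j + b j) := by congr 1; linarith [hab i j]
    _ = exp (a i) * exp (-lam * M i j) * exp (b j) := by rw [exp_add, exp_add]

/-- The (unique) minimizer of the entropy-regularized
objective over the transport polytope with strictly positive probability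
marginals has strictly positive entries and admits a Sinkhorn factorization
`P*_{ij} = u_i exp(−λ M_{ij}) v_j` with strictly positive scaling vectors. -/
theorem entReg_minimizer_sinkhorn_factorization (n : ℕ) (hn : 1 ≤ n)
    (M : Matrix (Fin n) (Fin n) ℝ) (μ ν : Fin n → ℝ)
    (hμpos : ∀ i, 0 < μ i) (hνpos : ∀ j, 0 < ν j)
    (hμsum : ∑ i, μ i = 1) (hνsum : ∑ j, ν j = 1)
    (lam : ℝ) (hlam : 0 < lam)
    (Pstar : Matrix (Fin n) (Fin n) ℝ)
    (hmem : Pstar ∈ transportPolytope n μ ν)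
    (hmin : ∀ Q ∈ transportPolytope n μ ν,
      entRegObjective n M lam Pstar ≤ entRegObjective n M lam Q) :
    (∀ i j, 0 < Pstar i j) ∧
      ∃ u v : Fin n → ℝ, (∀ i, 0 < u i) ∧ (∀ j, 0 < v j) ∧
        ∀ i j, Pstar i j = u i * Real.exp (-lam * M i j) * v j :=
  entReg_minimizer_sinkhorn_factorization_general n M μ ν hμpos hνpos lam hlam Pstar hmem hmin
end

section
/- Let S be a nonempty compact subset of a finite-dimensional real normed space, let g : S → ℝ be continuous with a unique minimizer x* ∈ S, and let f : S → ℝ be continuous. For each λ > 0 choose x_λ ∈ S minimizing the function x ↦ λ f(x) + g(x) over S. Then x_λ → x* as λ → 0⁺. -/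
/-- Abstract convergence of minimizers: on a nonempty compact
subset `S` of a finite-dimensional real normed space, if `g` is continuous on
`S` with a unique minimizer `xstar`, `f` is continuous on `S`, and for each
`λ > 0` the point `x λ ∈ S` minimizes `x ↦ λ f x + g x` over `S`, then
`x λ → xstar` as `λ → 0⁺`. -/
theorem regularized_minimizers_tendsto
    (E : Type*) [NormedAddCommGroup E] [NormedSpace ℝ E] [FiniteDimensional ℝ E]
    (S : Set E) (hS : S.Nonempty) (hScomp : IsCompact S)
    (g : E → ℝ) (hg : ContinuousOn g S)
    (xstar : E) (hxstar : xstar ∈ S)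
    (hxmin : ∀ y ∈ S, g xstar ≤ g y)
    (hxuniq : ∀ y ∈ S, g y = g xstar → y = xstar)
    (f : E → ℝ) (hf : ContinuousOn f S)
    (x : ℝ → E)
    (hxmem : ∀ lam : ℝ, 0 < lam → x lam ∈ S)
    (hxopt : ∀ lam : ℝ, 0 < lam →
      ∀ y ∈ S, lam * f (x lam) + g (x lam) ≤ lam * f y + g y) :
    Filter.Tendsto x (nhdsWithin 0 (Set.Ioi 0)) (nhds xstar) := by
  obtain ⟨B, hB⟩ := hScomp.exists_bound_of_continuousOn hf
  have hB0 : 0 ≤ B := le_trans (norm_nonneg _) (hB xstar hxstar)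
  intro U hU
  rw [Filter.mem_map]
  obtain ⟨V, hVU, hVopen, hxV⟩ := mem_nhds_iff.mp hU
  have hKcomp : IsCompact (S \ V) := hScomp.diff hVopen
  rcases (S \ V).eq_empty_or_nonempty with hK | hK
  · filter_upwards [self_mem_nhdsWithin] with lam hlam
    have hx := hxmem lam hlam
    have : x lam ∈ V := by
      by_contra h
      exact (Set.eq_empty_iff_forall_notMem.mp hK (x lam)) ⟨hx, h⟩
    exact hVU this
  · obtain ⟨z, hzK, hz⟩ := hKcomp.exists_isMinOn hK (hg.mono Set.diff_subset)
    have hzS : z ∈ S := hzK.1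
    have hzne : z ≠ xstar := by
      intro h; exact hzK.2 (h ▸ hxV)
    have hε : 0 < g z - g xstar := by
      rcases lt_or_eq_of_le (hxmin z hzS) with h | h
      · linarith
      · exact absurd (hxuniq z hzS h.symm) hzne
    set ε := g z - g xstar with hεdef
    have hδ : 0 < ε / (B + B + 1) := div_pos hε (by linarith)
    have hmem : Set.Ioo (0:ℝ) (ε / (B + B + 1)) ∈ nhdsWithin 0 (Set.Ioi 0) :=
      Ioo_mem_nhdsGT_of_mem ⟨le_refl 0, hδ⟩
    filter_upwards [hmem] with lam hlam
    have hlam0 : 0 < lam := hlam.1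
    have hxS := hxmem lam hlam0
    have hopt := hxopt lam hlam0 xstar hxstar
    have hfx : |f (x lam)| ≤ B := by
      have := hB (x lam) hxS; simpa using this
    have hfs : |f xstar| ≤ B := by
      have := hB xstar hxstar; simpa using this
    have hupper : g (x lam) - g xstar ≤ lam * (B + B) := by
      have h1 : f xstar - f (x lam) ≤ B + B := by
        have := abs_le.mp hfx; have := abs_le.mp hfs
        cases abs_le.mp hfx; cases abs_le.mp hfs; linarith
      nlinarith
    have hlt : lam * (B + B) < ε := by
      have h2 : lam * (B + B + 1) < ε := by
        have := hlam.2
        calc lam * (B + B + 1) < (ε / (B + B + 1)) * (B + B + 1) := by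
              apply mul_lt_mul_of_pos_right this (by linarith)
          _ = ε := div_mul_cancel₀ ε (by linarith)
      nlinarith
    apply hVU
    by_contra h
    have hxK : x lam ∈ S \ V := ⟨hxS, h⟩
    have := hz hxK
    simp only [Set.mem_setOf_eq] at this
    have : g z ≤ g (x lam) := this
    linarith
end
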